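/- arXiv:1106.4655 — 3 statements merged into one kernel-verified Lean document; each statement's English description precedes it below -/
import Mathlib

section
/- Let (X, μ) be a probability space with a measure-preserving action, let T_i, T_j be sequences of measure-preserving automorphisms and S a measure-preserving automorphism such that T_i^{-1} S T_i → Id and T_j^{-1} S T_j → Id (in the sense that μ(A Δ T_i^{-1}ST_i A) → 0 for all measurable A). Suppose a measure ν on X × X × X satisfies μ(A ∩ T_i B ∩ T_j C) → ν(A × B × C) for all measurable A, B, C. Then ν(SA × B × C) = ν(A × B × C). -/
/-!
Conjugating by `S` preserves `μ`, so `μ(A ∩ T_i B ∩ T_j C) = μ(SA ∩ S T_i B ∩ S T_j C)`, and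
`S T_i B = T_i (T_i⁻¹ S T_i) B` differs from `T_i B` by a set of measure
`μ(B ∆ T_i⁻¹ S T_i B) → 0` (likewise for `C`). Hence the two sequences
`μ(SA ∩ T_i B ∩ T_j C)` and `μ(A ∩ T_i B ∩ T_j C)` are asymptotically equal, and so are their
limits `ν(SA × B × C)` and `ν(A × B × C)`.
-/

open MeasureTheory Filter Set
open scoped symmDiff ENNReal

theorem eq_of_tendsto_of_le_add {ι α : Type*} [AddMonoid α] [PartialOrder α] [TopologicalSpace α]
    [ContinuousAdd α] [OrderClosedTopology α] {l : Filter ι} [l.NeBot] {f g h : ι → α} {a b : α}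
    (hf : Tendsto f l (nhds a)) (hg : Tendsto g l (nhds b)) (hh : Tendsto h l (nhds 0))
    (hfg : ∀ i, f i ≤ g i + h i) (hgf : ∀ i, g i ≤ f i + h i) : a = b := by
  refine le_antisymm ?_ ?_
  · simpa using le_of_tendsto_of_tendsto' hf (hg.add hh) hfg
  · simpa using le_of_tendsto_of_tendsto' hg (hf.add hh) hgf

namespace MeasureTheory

variable {X : Type*} [MeasurableSpace X] {μ : Measure X}

theorem MeasurePreserving.measure_image_equiv {Y : Type*} [MeasurableSpace Y] {ν : Measure Y}
    {e : X ≃ᵐ Y} (he : MeasurePreserving e μ ν) (s : Set X) : ν (e '' s) = μ s := by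
  rw [e.image_eq_preimage_symm]
  exact (he.symm e).measure_preimage_equiv s

theorem measure_inter_inter_le_add_symmDiff (μ : Measure X) (W P P' Q Q' : Set X) :
    μ (W ∩ P ∩ Q) ≤ μ (W ∩ P' ∩ Q') + (μ (P ∆ P') + μ (Q ∆ Q')) := by
  have hsub : W ∩ P ∩ Q ⊆ (W ∩ P' ∩ Q') ∪ ((P ∆ P') ∪ (Q ∆ Q')) := by
    rintro x ⟨⟨hW, hP⟩, hQ⟩
    by_cases hP' : x ∈ P'
    · by_cases hQ' : x ∈ Q'
      · exact Or.inl ⟨⟨hW, hP'⟩, hQ'⟩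
      · exact Or.inr (Or.inr (Or.inl ⟨hQ, hQ'⟩))
    · exact Or.inr (Or.inl (Or.inl ⟨hP, hP'⟩))
  calc μ (W ∩ P ∩ Q) ≤ μ ((W ∩ P' ∩ Q') ∪ ((P ∆ P') ∪ (Q ∆ Q'))) := measure_mono hsub
    _ ≤ μ (W ∩ P' ∩ Q') + (μ (P ∆ P') + μ (Q ∆ Q')) :=
      (measure_union_le _ _).trans (by gcongr; exact measure_union_le _ _)

theorem image_conj_image (S T : X ≃ᵐ X) (B : Set X) :
    T '' ((fun x => T.symm (S (T x))) '' B) = S '' (T '' B) := by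
  simp only [image_image, MeasurableEquiv.apply_symm_apply]

theorem MeasurePreserving.measure_image_symmDiff {Y : Type*} [MeasurableSpace Y]
    {ν : Measure Y} {e : X ≃ᵐ Y} (he : MeasurePreserving e μ ν) (s t : Set X) :
    ν ((e '' s) ∆ (e '' t)) = μ (s ∆ t) := by
  rw [← image_symmDiff e.injective, he.measure_image_equiv]

theorem measure_image_inter_conj_inter_conj {S : X ≃ᵐ X} (hS : MeasurePreserving S μ μ)
    (T T' : X ≃ᵐ X) (A B C : Set X) :
    μ (S '' A ∩ T '' ((fun x => T.symm (S (T x))) '' B) ∩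
        T' '' ((fun x => T'.symm (S (T' x))) '' C)) = μ (A ∩ T '' B ∩ T' '' C) := by
  rw [image_conj_image, image_conj_image, ← image_inter S.injective, ← image_inter S.injective,
    hS.measure_image_equiv]

variable {S T T' : X ≃ᵐ X} (A B C : Set X)

theorem measure_image_inter_inter_le (hS : MeasurePreserving S μ μ)
    (hT : MeasurePreserving T μ μ) (hT' : MeasurePreserving T' μ μ) :
    μ (S '' A ∩ T '' B ∩ T' '' C) ≤ μ (A ∩ T '' B ∩ T' '' C) +
      (μ (B ∆ ((fun x => T.symm (S (T x))) '' B)) +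
        μ (C ∆ ((fun x => T'.symm (S (T' x))) '' C))) := by
  rw [← measure_image_inter_conj_inter_conj hS T T' A B C, ← hT.measure_image_symmDiff B,
    ← hT'.measure_image_symmDiff C]
  exact measure_inter_inter_le_add_symmDiff μ _ _ _ _ _

theorem measure_inter_inter_le_image (hS : MeasurePreserving S μ μ)
    (hT : MeasurePreserving T μ μ) (hT' : MeasurePreserving T' μ μ) :
    μ (A ∩ T '' B ∩ T' '' C) ≤ μ (S '' A ∩ T '' B ∩ T' '' C) +
      (μ (B ∆ ((fun x => T.symm (S (T x))) '' B)) +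
        μ (C ∆ ((fun x => T'.symm (S (T' x))) '' C))) := by
  rw [← measure_image_inter_conj_inter_conj hS T T' A B C, ← hT.measure_image_symmDiff B,
    ← hT'.measure_image_symmDiff C, symmDiff_comm (T '' B), symmDiff_comm (T' '' C)]
  exact measure_inter_inter_le_add_symmDiff μ _ _ _ _ _

end MeasureTheory

theorem stmt10_general {X : Type*} [MeasurableSpace X] (μ : Measure X)
    (Ti Tj : ℕ → X ≃ᵐ X)
    (hTi : ∀ n, MeasurePreserving (Ti n) μ μ) (hTj : ∀ n, MeasurePreserving (Tj n) μ μ)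
    (S : X ≃ᵐ X) (hS : MeasurePreserving S μ μ)
    (h1 : ∀ A : Set X, MeasurableSet A →
      Tendsto (fun n => μ (A ∆ ((fun x => (Ti n).symm (S (Ti n x))) '' A))) atTop (nhds 0))
    (h2 : ∀ A : Set X, MeasurableSet A →
      Tendsto (fun n => μ (A ∆ ((fun x => (Tj n).symm (S (Tj n x))) '' A))) atTop (nhds 0))
    (ν : Measure (X × X × X))
    (hlim : ∀ A B C : Set X, MeasurableSet A → MeasurableSet B → MeasurableSet C →
      Tendsto (fun p : ℕ × ℕ => μ (A ∩ (Ti p.1) '' B ∩ (Tj p.2) '' C))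
        (atTop ×ˢ atTop) (nhds (ν (A ×ˢ B ×ˢ C)))) :
    ∀ A B C : Set X, MeasurableSet A → MeasurableSet B → MeasurableSet C →
      ν ((S '' A) ×ˢ B ×ˢ C) = ν (A ×ˢ B ×ˢ C) := by
  intro A B C hA hB hC
  have hSA : MeasurableSet (S '' A) := S.measurableSet_image.2 hA
  have herror : Tendsto (fun p : ℕ × ℕ => μ (B ∆ ((fun x => (Ti p.1).symm (S (Ti p.1 x))) '' B)) +
      μ (C ∆ ((fun x => (Tj p.2).symm (S (Tj p.2 x))) '' C))) (atTop ×ˢ atTop) (nhds 0) := by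
    simpa using ((h1 B hB).comp tendsto_fst).add ((h2 C hC).comp tendsto_snd)
  exact eq_of_tendsto_of_le_add (hlim (S '' A) B C hSA hB hC) (hlim A B C hA hB hC) herror
    (fun p => measure_image_inter_inter_le A B C hS (hTi p.1) (hTj p.2))
    (fun p => measure_inter_inter_le_image A B C hS (hTi p.1) (hTj p.2))

/-- Let `T_i`, `T_j` be sequences of measure-preserving
automorphisms of a probability space and `S` a measure-preserving automorphism
with `T_i⁻¹ S T_i → Id` and `T_j⁻¹ S T_j → Id` (weakly).  If a measure `ν` on
`X³` satisfies `μ(A ∩ T_i B ∩ T_j C) → ν(A × B × C)`, then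
`ν(SA × B × C) = ν(A × B × C)`. -/
theorem stmt10 {X : Type*} [MeasurableSpace X] (μ : Measure X)
    [IsProbabilityMeasure μ]
    (Ti Tj : ℕ → X ≃ᵐ X)
    (hTi : ∀ n, MeasurePreserving (Ti n) μ μ) (hTj : ∀ n, MeasurePreserving (Tj n) μ μ)
    (S : X ≃ᵐ X) (hS : MeasurePreserving S μ μ)
    (h1 : ∀ A : Set X, MeasurableSet A →
      Tendsto (fun n => μ (A ∆ ((fun x => (Ti n).symm (S (Ti n x))) '' A))) atTop (nhds 0))
    (h2 : ∀ A : Set X, MeasurableSet A →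
      Tendsto (fun n => μ (A ∆ ((fun x => (Tj n).symm (S (Tj n x))) '' A))) atTop (nhds 0))
    (ν : Measure (X × X × X))
    (hlim : ∀ A B C : Set X, MeasurableSet A → MeasurableSet B → MeasurableSet C →
      Tendsto (fun p : ℕ × ℕ => μ (A ∩ (Ti p.1) '' B ∩ (Tj p.2) '' C))
        (atTop ×ˢ atTop) (nhds (ν (A ×ˢ B ×ˢ C)))) :
    ∀ A B C : Set X, MeasurableSet A → MeasurableSet B → MeasurableSet C →
      ν ((S '' A) ×ˢ B ×ˢ C) = ν (A ×ˢ B ×ˢ C) :=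
  stmt10_general μ Ti Tj hTi hTj S hS h1 h2 ν hlim
end

section
/- Let T be a mixing measure-preserving transformation of an infinite σ-finite measure space (X, μ). If S is a measure-preserving automorphism whose support has finite measure (μ{x : Sx ≠ x} < ∞), then S belongs to the homoclinic group of T, i.e., μ(A Δ T^nST^{-n}A) → 0 as n → ∞ for every finite measure set A. -/
open MeasureTheory Filter Set
open scoped symmDiff ENNReal

/-!
A measure-preserving automorphism `e` moves `A` only inside its support `D = {x | e x ≠ x}`:
`A ∆ eA ⊆ (A ∩ D) ∪ e(A ∩ D)`, hence `μ (A ∆ eA) ≤ 2 μ (A ∩ D)`. The support of `Tⁿ S T⁻ⁿ` is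
`Tⁿ (supp S)`, and mixing, applied to a measurable hull of `supp S`, makes
`μ (A ∩ Tⁿ (supp S)) → 0`.
-/

/-- The `n`-th iterate (with `n : ℤ`) of a measurable automorphism, as a map. -/
noncomputable def mzpow {X : Type*} [MeasurableSpace X] (T : X ≃ᵐ X) (n : ℤ) : X → X :=
  if 0 ≤ n then (⇑T)^[n.toNat] else (⇑T.symm)^[(-n).toNat]

section Support

variable {X : Type*}

theorem setOf_conj_apply_ne_eq_image (e S : X ≃ X) :
    {x | e (S (e.symm x)) ≠ x} = e '' {x | S x ≠ x} := by
  ext x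
  simp only [mem_ofPred_eq, e.image_eq_preimage_symm, mem_preimage, ne_eq,
    ← e.eq_symm_apply]

variable [MeasurableSpace X] {μ : Measure X}

theorem measure_symmDiff_image_le (e : X ≃ᵐ X) (he : MeasurePreserving e μ μ) (A : Set X) :
    μ (A ∆ (e '' A)) ≤ 2 * μ (A ∩ {x | e x ≠ x}) := by
  set D := A ∩ {x | e x ≠ x}
  have hsub : A ∆ (e '' A) ⊆ D ∪ e '' D := by
    rintro x (⟨hxA, hx⟩ | ⟨⟨y, hyA, rfl⟩, hx⟩)
    · exact .inl ⟨hxA, fun hfix => hx ⟨x, hxA, hfix⟩⟩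
    · exact .inr ⟨y, ⟨hyA, fun hfix => hx (by rwa [hfix])⟩, rfl⟩
  calc μ (A ∆ (e '' A)) ≤ μ D + μ (e '' D) := (measure_mono hsub).trans (measure_union_le _ _)
    _ = 2 * μ D := by
      rw [e.image_eq_preimage_symm, he.symm.measure_preimage_equiv, two_mul]

end Support

namespace MeasurableEquiv

variable {X : Type*} [MeasurableSpace X]

theorem leftInverse_mzpow_neg (T : X ≃ᵐ X) (n : ℤ) :
    Function.LeftInverse (mzpow T (-n)) (mzpow T n) := by
  rcases lt_trichotomy n 0 with hn | rfl | hn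
  · simp only [mzpow, if_neg hn.not_ge, if_pos (neg_nonneg.2 hn.le)]
    exact Function.LeftInverse.iterate T.apply_symm_apply _
  · simp [mzpow, Function.LeftInverse]
  · simp only [mzpow, if_pos hn.le, if_neg (neg_neg_of_pos hn).not_ge, neg_neg]
    exact Function.LeftInverse.iterate T.symm_apply_apply _

theorem measurable_mzpow (T : X ≃ᵐ X) (n : ℤ) : Measurable (mzpow T n) := by
  unfold mzpow
  split
  · exact T.measurable.iterate _
  · exact T.symm.measurable.iterate _

theorem measurePreserving_mzpow {μ : Measure X} (T : X ≃ᵐ X) (hT : MeasurePreserving T μ μ)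
    (n : ℤ) : MeasurePreserving (mzpow T n) μ μ := by
  unfold mzpow
  split
  · exact hT.iterate _
  · exact hT.symm.iterate _

noncomputable def zpow (T : X ≃ᵐ X) (n : ℤ) : X ≃ᵐ X where
  toFun := mzpow T n
  invFun := mzpow T (-n)
  left_inv := T.leftInverse_mzpow_neg n
  right_inv := by
    have h := T.leftInverse_mzpow_neg (-n)
    rwa [neg_neg] at h
  measurable_toFun := T.measurable_mzpow n
  measurable_invFun := T.measurable_mzpow (-n)

end MeasurableEquiv

theorem stmt13_general {X : Type*} [MeasurableSpace X] (μ : Measure X)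
    (T : X ≃ᵐ X) (hT : MeasurePreserving T μ μ)
    (hmix : ∀ A B : Set X, MeasurableSet A → MeasurableSet B → μ A < ∞ → μ B < ∞ →
      Tendsto (fun m : ℤ => μ (A ∩ mzpow T m '' B)) cofinite (nhds 0))
    (S : X ≃ᵐ X) (hS : MeasurePreserving S μ μ)
    (hsupp : μ {x | S x ≠ x} < ∞) :
    ∀ A : Set X, MeasurableSet A → μ A < ∞ →
      Tendsto (fun n : ℕ =>
        μ (A ∆ ((fun x => mzpow T (n : ℤ) (S (mzpow T (-(n : ℤ)) x))) '' A)))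
        atTop (nhds 0) := by
  intro A hA hAfin
  set C := toMeasurable μ {x | S x ≠ x}
  have hmixC : Tendsto (fun n : ℕ => μ (A ∩ mzpow T n '' C)) atTop (nhds 0) :=
    (hmix A C hA (measurableSet_toMeasurable _ _) hAfin (by rwa [measure_toMeasurable])).comp
      (Nat.cofinite_eq_atTop ▸ Nat.cast_injective.tendsto_cofinite)
  have hbound : Tendsto (fun n : ℕ => 2 * μ (A ∩ mzpow T n '' C)) atTop (nhds 0) := by
    simpa using ENNReal.Tendsto.const_mul hmixC (.inr ENNReal.ofNat_ne_top)
  refine tendsto_of_tendsto_of_tendsto_of_le_of_le tendsto_const_nhds hbound (fun _ => zero_le)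
    fun n => ?_
  set e := (T.zpow (-n)).trans (S.trans (T.zpow n))
  have he : MeasurePreserving e μ μ := (T.measurePreserving_mzpow hT (-n)).trans
    (hS.trans (T.measurePreserving_mzpow hT n))
  have hsupp_e : {x | e x ≠ x} ⊆ mzpow T n '' C :=
    (setOf_conj_apply_ne_eq_image (T.zpow n).toEquiv S.toEquiv).trans_subset
      (image_mono (subset_toMeasurable _ _))
  exact (measure_symmDiff_image_le e he A).trans (by gcongr)

/-- If `T` is a mixing measure-preserving automorphism of an
infinite σ-finite measure space and `S` is a measure-preserving automorphism
whose support `{x : Sx ≠ x}` has finite measure, then `S` is homoclinic for `T`: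
`μ(A ∆ TⁿST⁻ⁿA) → 0` for every finite measure set `A`. -/
theorem stmt13 {X : Type*} [MeasurableSpace X] (μ : Measure X) [SigmaFinite μ]
    (hinf : μ univ = ∞) (T : X ≃ᵐ X) (hT : MeasurePreserving T μ μ)
    (hmix : ∀ A B : Set X, MeasurableSet A → MeasurableSet B → μ A < ∞ → μ B < ∞ →
      Tendsto (fun m : ℤ => μ (A ∩ mzpow T m '' B)) cofinite (nhds 0))
    (S : X ≃ᵐ X) (hS : MeasurePreserving S μ μ)
    (hsupp : μ {x | S x ≠ x} < ∞) :
    ∀ A : Set X, MeasurableSet A → μ A < ∞ →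
      Tendsto (fun n : ℕ =>
        μ (A ∆ ((fun x => mzpow T (n : ℤ) (S (mzpow T (-(n : ℤ)) x))) '' A)))
        atTop (nhds 0) :=
  stmt13_general μ T hT hmix S hS hsupp
end

section
/- Let T be a rank one transformation with towers of heights h_j, and for a self-joining ν define the approximating measures Δ^k_j by restricting the off-diagonal Δ^k to the set C^k_j = ⊔_{i=0}^{h_j-k} T^iE_j × T^{i+k}E_j (for 0 ≤ k ≤ h_j, and symmetrically for negative k). Then for every j and all sets A, B that are unions of levels of the stage-j tower, ν(A × B) = Σ_{|k| ≤ h_j} a^k_j Δ^k_j(A × B), where a^k_j = ν(E_j × T^kE_j)/μ(E_j) for k ≥ 0 and a^k_j = ν(T^{-k}E_j × E_j)/μ(E_j) for k < 0. -/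
open MeasureTheory Filter Set
open scoped ENNReal

lemma mzpow_eq {X : Type*} [MeasurableSpace X] (T : X ≃ᵐ X) (n : ℤ) :
    mzpow T n = ⇑(T.toEquiv ^ n) := by
  unfold mzpow
  split_ifs with hn
  · rw [← Int.toNat_of_nonneg hn, zpow_natCast, Equiv.Perm.coe_pow]
    rfl
  · push_neg at hn
    have : n = -((-n).toNat : ℤ) := by omega
    rw [this, zpow_neg, zpow_natCast, ← inv_pow, Equiv.Perm.coe_pow]
    simp only [neg_neg, Int.toNat_natCast]
    rfl

lemma iter_eq {X : Type*} [MeasurableSpace X] (T : X ≃ᵐ X) (i : ℕ) :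
    (⇑T)^[i] = ⇑(T.toEquiv ^ (i : ℤ)) := by
  rw [← mzpow_eq, mzpow, if_pos (by positivity)]
  simp

lemma mzpow_measurable {X : Type*} [MeasurableSpace X] (T : X ≃ᵐ X) (n : ℤ) :
    Measurable (mzpow T n) := by
  unfold mzpow
  split_ifs
  · exact T.measurable.iterate _
  · exact T.symm.measurable.iterate _

lemma zpow_measurable {X : Type*} [MeasurableSpace X] (T : X ≃ᵐ X) (n : ℤ) :
    Measurable ⇑(T.toEquiv ^ n) := by
  rw [← mzpow_eq]; exact mzpow_measurable T n

lemma zpow_mp {X : Type*} [MeasurableSpace X] (μ : Measure X) (T : X ≃ᵐ X)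
    (hT : MeasurePreserving T μ μ) (n : ℤ) :
    MeasurePreserving ⇑(T.toEquiv ^ n) μ μ := by
  rw [← mzpow_eq]
  unfold mzpow
  split_ifs
  · exact hT.iterate _
  · exact (hT.symm T).iterate _

lemma zpow_image_meas {X : Type*} [MeasurableSpace X] (T : X ≃ᵐ X) (n : ℤ)
    {s : Set X} (hs : MeasurableSet s) : MeasurableSet (⇑(T.toEquiv ^ n) '' s) := by
  rw [Equiv.image_eq_preimage_symm]
  have : ⇑(T.toEquiv ^ n).symm = ⇑(T.toEquiv ^ (-n)) := by rw [zpow_neg]; rfl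
  rw [this]
  exact zpow_measurable T (-n) hs

lemma zpow_image_image {X : Type*} [MeasurableSpace X] (T : X ≃ᵐ X) (a b : ℤ) (s : Set X) :
    ⇑(T.toEquiv ^ a) '' (⇑(T.toEquiv ^ b) '' s) = ⇑(T.toEquiv ^ (a + b)) '' s := by
  rw [Set.image_image]
  refine Set.image_congr fun x _ => ?_
  rw [zpow_add]
  rfl

lemma zpow_image_measure {X : Type*} [MeasurableSpace X] (μ : Measure X) (T : X ≃ᵐ X)
    (hT : MeasurePreserving T μ μ) (n : ℤ) {s : Set X} (hs : MeasurableSet s) :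
    μ (⇑(T.toEquiv ^ n) '' s) = μ s := by
  rw [Equiv.image_eq_preimage_symm]
  have h1 : ⇑(T.toEquiv ^ n).symm = ⇑(T.toEquiv ^ (-n)) := by rw [zpow_neg]; rfl
  rw [h1, (zpow_mp μ T hT (-n)).measure_preimage hs.nullMeasurableSet]

/-- For a rank one transformation with tower
`E_j, TE_j, …, T^{h_j}E_j` and a self-joining `ν`, let
`C^k_j = ⊔_i T^iE_j × T^{i+k}E_j` (over admissible `i`), let `Δ^k` be the
off-diagonal (`Δ^k(A×B) = μ(T^kA ∩ B)`, the image of `μ` under `x ↦ (x, T^kx)`),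
let `Δ^k_j` be its restriction to `C^k_j`, and let
`a^k_j = ν(E_j × T^kE_j)/μ(E_j)` for `k ≥ 0`, `a^k_j = ν(T^{-k}E_j × E_j)/μ(E_j)`
for `k < 0`.  Then for all `A, B` that are unions of levels of the stage-`j`
tower, `ν(A × B) = ∑_{|k| ≤ h_j} a^k_j Δ^k_j(A × B)`. -/
theorem stmt17 {X : Type*} [MeasurableSpace X] (μ : Measure X) (T : X ≃ᵐ X)
    (hT : MeasurePreserving T μ μ)
    (E : ℕ → Set X) (h : ℕ → ℕ) (hE : ∀ j, MeasurableSet (E j))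
    (hEfin : ∀ j, μ (E j) < ∞) (hEpos : ∀ j, 0 < μ (E j))
    (hdisj : ∀ j, ∀ i i' : ℕ, i ≤ h j → i' ≤ h j → i ≠ i' →
      Disjoint ((⇑T)^[i] '' E j) ((⇑T)^[i'] '' E j))
    (ν : Measure (X × X))
    (hinv : Measure.map (fun p : X × X => (T p.1, T p.2)) ν = ν)
    (hm1 : ∀ A : Set X, MeasurableSet A → ν (A ×ˢ univ) = μ A)
    (hm2 : ∀ A : Set X, MeasurableSet A → ν (univ ×ˢ A) = μ A)
    (j : ℕ)
    (C : ℤ → Set (X × X))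
    (hC : ∀ k, C k = {p : X × X | ∃ i : ℤ, 0 ≤ i ∧ i ≤ (h j : ℤ) ∧
      0 ≤ i + k ∧ i + k ≤ (h j : ℤ) ∧
      p.1 ∈ mzpow T i '' E j ∧ p.2 ∈ mzpow T (i + k) '' E j})
    (a : ℤ → ℝ≥0∞)
    (ha : ∀ k : ℤ, a k =
      if 0 ≤ k then ν (E j ×ˢ (mzpow T k '' E j)) / μ (E j)
      else ν ((mzpow T (-k) '' E j) ×ˢ E j) / μ (E j)) :
    ∀ IA IB : Finset ℕ, (∀ i ∈ IA, i ≤ h j) → (∀ i ∈ IB, i ≤ h j) →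
      ν ((⋃ i ∈ IA, (⇑T)^[i] '' E j) ×ˢ (⋃ i ∈ IB, (⇑T)^[i] '' E j)) =
      ∑ k ∈ Finset.Icc (-(h j : ℤ)) (h j), a k *
        (Measure.map (fun x => (x, mzpow T k x)) μ)
          (((⋃ i ∈ IA, (⇑T)^[i] '' E j) ×ˢ (⋃ i ∈ IB, (⇑T)^[i] '' E j)) ∩ C k) := by
  classical
  intro IA IB hIA hIB
  set e := T.toEquiv with he
  set Q : ℤ → Set X := fun n => ⇑(e ^ n) '' E j with hQdef
  have hQm : ∀ n : ℤ, MeasurableSet (Q n) := fun n => zpow_image_meas T n (hE j)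
  have hQμ : ∀ n : ℤ, μ (Q n) = μ (E j) := fun n => zpow_image_measure μ T hT n (hE j)
  have hQ0 : Q 0 = E j := by simp [hQdef]
  have hQdisj : ∀ {a b : ℤ}, 0 ≤ a → a ≤ (h j : ℤ) → 0 ≤ b → b ≤ (h j : ℤ) → a ≠ b →
      Disjoint (Q a) (Q b) := by
    intro a b h0a hha h0b hhb hab
    have := hdisj j a.toNat b.toNat (by omega) (by omega) (by omega)
    rw [iter_eq, iter_eq, Int.toNat_of_nonneg h0a, Int.toNat_of_nonneg h0b] at this
    exact this
  -- one-step shift invariance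
  have himg : ∀ c : ℤ, Q (c + 1) = ⇑T '' Q c := by
    intro c
    have h1 : ⇑T = ⇑(e ^ (1 : ℤ)) := by rw [zpow_one]; rfl
    rw [hQdef]
    simp only
    rw [h1, zpow_image_image T 1 c, add_comm]
  have hshift1 : ∀ a b : ℤ, ν (Q a ×ˢ Q b) = ν (Q (a + 1) ×ˢ Q (b + 1)) := by
    intro a b
    have hmap : Measurable (fun p : X × X => (T p.1, T p.2)) :=
      (T.measurable.comp measurable_fst).prodMk (T.measurable.comp measurable_snd)
    conv_rhs => rw [← hinv]
    rw [Measure.map_apply hmap ((hQm _).prod (hQm _))]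
    congr 1
    ext ⟨x, y⟩
    simp only [mem_preimage, mem_prod, himg, T.injective.mem_set_image]
  have hshift : ∀ m a b : ℤ, ν (Q a ×ˢ Q b) = ν (Q (a + m) ×ˢ Q (b + m)) := by
    intro m
    induction m using Int.induction_on with
    | zero => simp
    | succ i ih =>
      intro a b
      rw [ih a b, hshift1 (a + i) (b + i)]
      ring_nf
    | pred i ih =>
      intro a b
      rw [ih a b]
      have h2 := hshift1 (a + (-(i : ℤ) - 1)) (b + (-(i : ℤ) - 1))
      rw [show a + (-(i : ℤ) - 1) + 1 = a + -(i : ℤ) by ring,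
        show b + (-(i : ℤ) - 1) + 1 = b + -(i : ℤ) by ring] at h2
      rw [← h2]
  -- value of ν on shifted rectangles
  have hmz : ∀ k : ℤ, mzpow T k '' E j = Q k := fun k => by rw [mzpow_eq, ← he]
  have hcancel : ∀ x : ℝ≥0∞, x / μ (E j) * μ (E j) = x :=
    fun x => ENNReal.div_mul_cancel (hEpos j).ne' (hEfin j).ne
  have hnu : ∀ (k i : ℤ), ν (Q i ×ˢ Q (i + k)) = a k * μ (E j) := by
    intro k i
    rcases le_or_gt 0 k with hk | hk
    · rw [ha k, if_pos hk, hmz k, hcancel]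
      have := hshift i 0 k
      rw [zero_add, add_comm k i, hQ0] at this
      exact this.symm
    · rw [ha k, if_neg (not_le.mpr hk), hmz (-k), hcancel]
      have := hshift (i + k) (-k) 0
      rw [zero_add, show -k + (i + k) = i by ring, hQ0] at this
      exact this.symm
  -- levels as Q
  have hPQ : ∀ i : ℕ, (⇑T)^[i] '' E j = Q (i : ℤ) := fun i => by rw [iter_eq, ← he]
  have hQadd : ∀ a b : ℤ, ⇑(e ^ a) '' Q b = Q (a + b) := fun a b => zpow_image_image T a b (E j)
  set A := ⋃ i ∈ IA, (⇑T)^[i] '' E j with hA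
  set B := ⋃ i ∈ IB, (⇑T)^[i] '' E j with hB
  have hAm : MeasurableSet A := by
    refine MeasurableSet.biUnion IA.countable_toSet fun i _ => ?_
    rw [hPQ]; exact hQm _
  have hBm : MeasurableSet B := by
    refine MeasurableSet.biUnion IB.countable_toSet fun i _ => ?_
    rw [hPQ]; exact hQm _
  have hprodL : ∀ {s t : Set X} (u v : Set X), Disjoint s t → Disjoint (s ×ˢ u) (t ×ˢ v) := by
    intro s t u v hd
    rw [Set.disjoint_left] at hd ⊢
    rintro ⟨x, y⟩ ⟨hx, -⟩ ⟨hx', -⟩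
    exact hd hx hx'
  have hprodR : ∀ {s t : Set X} (u v : Set X), Disjoint s t → Disjoint (u ×ˢ s) (v ×ˢ t) := by
    intro s t u v hd
    rw [Set.disjoint_left] at hd ⊢
    rintro ⟨x, y⟩ ⟨-, hy⟩ ⟨-, hy'⟩
    exact hd hy hy'
  -- LHS decomposition
  have hLHS : ν (A ×ˢ B) = ∑ i ∈ IA, ∑ i' ∈ IB, ν (Q (i : ℤ) ×ˢ Q (i' : ℤ)) := by
    have hAB : A ×ˢ B = ⋃ i ∈ IA, (Q (i : ℤ) ×ˢ B) := by
      rw [hA]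
      simp only [Set.iUnion_prod_const, hPQ]
    rw [hAB, measure_biUnion_finset ?_ ?_]
    · refine Finset.sum_congr rfl fun i _ => ?_
      have hiB : Q (i : ℤ) ×ˢ B = ⋃ i' ∈ IB, Q (i : ℤ) ×ˢ Q (i' : ℤ) := by
        rw [hB]
        simp only [Set.prod_iUnion, hPQ]
      rw [hiB, measure_biUnion_finset ?_ ?_]
      · intro x hx y hy hxy
        refine hprodR _ _ (hQdisj (by positivity) ?_ (by positivity) ?_ ?_)
        · exact_mod_cast hIB x (Finset.mem_coe.mp hx)
        · exact_mod_cast hIB y (Finset.mem_coe.mp hy)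
        · exact_mod_cast hxy
      · exact fun b _ => (hQm _).prod (hQm _)
    · intro x hx y hy hxy
      refine hprodL _ _ (hQdisj (by positivity) ?_ (by positivity) ?_ ?_)
      · exact_mod_cast hIA x (Finset.mem_coe.mp hx)
      · exact_mod_cast hIA y (Finset.mem_coe.mp hy)
      · exact_mod_cast hxy
    · exact fun b _ => (hQm _).prod hBm
  -- the index sets for each k
  set F : ℤ → Finset ℕ := fun k => IA.filter
    (fun i => 0 ≤ (i : ℤ) + k ∧ (i : ℤ) + k ≤ (h j : ℤ) ∧ ((i : ℤ) + k).toNat ∈ IB) with hF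
  -- RHS term computation
  have hRHS : ∀ k ∈ Finset.Icc (-(h j : ℤ)) (h j : ℤ), a k *
      (Measure.map (fun x => (x, mzpow T k x)) μ) ((A ×ˢ B) ∩ C k) =
      ∑ i ∈ F k, ν (Q (i : ℤ) ×ˢ Q ((i : ℤ) + k)) := by
    intro k _
    have hg : Measurable (fun x => (x, mzpow T k x)) :=
      measurable_id.prodMk (mzpow_measurable T k)
    have hCalt : C k = ⋃ (i : ℤ), ⋃ (_ : 0 ≤ i ∧ i ≤ (h j : ℤ) ∧ 0 ≤ i + k ∧ i + k ≤ (h j : ℤ)),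
        (Q i ×ˢ Q (i + k)) := by
      rw [hC k]
      ext p
      simp only [hmz, mem_setOf_eq, mem_iUnion, mem_prod]
      exact exists_congr fun i => by tauto
    have hCm : MeasurableSet (C k) := by
      rw [hCalt]
      exact MeasurableSet.iUnion fun i => MeasurableSet.iUnion fun _ => (hQm i).prod (hQm (i + k))
    rw [Measure.map_apply hg ((hAm.prod hBm).inter hCm)]
    have hpre : (fun x => (x, mzpow T k x)) ⁻¹' ((A ×ˢ B) ∩ C k) = ⋃ i ∈ F k, Q (i : ℤ) := by
      ext x
      constructor
      · rintro ⟨⟨hxA, hxB⟩, hxC⟩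
        rw [hCalt] at hxC
        simp only [mem_iUnion, mem_prod] at hxC
        obtain ⟨i, ⟨h0i, hhi, h0ik, hhik⟩, hx1, hx2⟩ := hxC
        obtain ⟨iA, hiA, hxiA⟩ := Set.mem_iUnion₂.mp hxA
        rw [hPQ] at hxiA
        obtain ⟨iB, hiB, hxiB⟩ := Set.mem_iUnion₂.mp hxB
        rw [hPQ] at hxiB
        have heqA : (iA : ℤ) = i := by
          by_contra hne
          exact Set.disjoint_left.mp
            (hQdisj (by positivity) (by exact_mod_cast hIA iA hiA) h0i hhi hne) hxiA hx1
        have heqB : (iB : ℤ) = i + k := by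
          by_contra hne
          exact Set.disjoint_left.mp
            (hQdisj (by positivity) (by exact_mod_cast hIB iB hiB) h0ik hhik hne) hxiB hx2
        refine Set.mem_biUnion (Finset.mem_filter.mpr ⟨hiA, ?_, ?_, ?_⟩) hxiA
        · omega
        · omega
        · have : ((iA : ℤ) + k).toNat = iB := by omega
          rw [this]; exact hiB
      · intro hx
        obtain ⟨i, hiF, hxQ⟩ := Set.mem_iUnion₂.mp hx
        obtain ⟨hiIA, h0ik, hhik, htIB⟩ := Finset.mem_filter.mp hiF
        have hmzk : mzpow T k x ∈ Q ((i : ℤ) + k) := by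
          have h5 : mzpow T k x ∈ ⇑(e ^ k) '' Q (i : ℤ) := by
            rw [mzpow_eq, ← he]; exact mem_image_of_mem _ hxQ
          rw [hQadd, add_comm] at h5
          exact h5
        refine ⟨⟨?_, ?_⟩, ?_⟩
        · exact Set.mem_biUnion hiIA (by rw [hPQ]; exact hxQ)
        · refine Set.mem_biUnion htIB ?_
          rw [hPQ]
          have : ((((i : ℤ) + k).toNat : ℤ)) = (i : ℤ) + k := by omega
          rw [this]
          exact hmzk
        · rw [hCalt]
          refine mem_iUnion.mpr ⟨(i : ℤ), mem_iUnion.mpr ⟨⟨by positivity,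
            by exact_mod_cast hIA i hiIA, h0ik, hhik⟩, hxQ, hmzk⟩⟩
    rw [hpre, measure_biUnion_finset ?_ ?_]
    · rw [Finset.mul_sum]
      exact Finset.sum_congr rfl fun i _ => by rw [hQμ, ← hnu k (i : ℤ)]
    · intro x hx y hy hxy
      have hx' := (Finset.mem_filter.mp (Finset.mem_coe.mp hx)).1
      have hy' := (Finset.mem_filter.mp (Finset.mem_coe.mp hy)).1
      refine hQdisj (by positivity) ?_ (by positivity) ?_ ?_
      · exact_mod_cast hIA x hx'
      · exact_mod_cast hIA y hy'
      · exact_mod_cast hxy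
    · exact fun b _ => hQm _
  -- put everything together
  rw [hLHS, Finset.sum_congr rfl hRHS, Finset.sum_sigma', Finset.sum_sigma']
  refine Finset.sum_nbij' (i := fun x : Σ _ : ℕ, ℕ => (⟨(x.2 : ℤ) - (x.1 : ℤ), x.1⟩ : Σ _ : ℤ, ℕ))
    (j := fun y : Σ _ : ℤ, ℕ => (⟨y.2, ((y.2 : ℤ) + y.1).toNat⟩ : Σ _ : ℕ, ℕ))
    ?_ ?_ ?_ ?_ ?_
  · rintro ⟨iA, iB⟩ hmem
    rw [Finset.mem_sigma] at hmem ⊢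
    dsimp only
    obtain ⟨h1, h2⟩ := hmem
    have hA1 := hIA iA h1
    have hB1 := hIB iB h2
    refine ⟨Finset.mem_Icc.mpr ⟨by omega, by omega⟩, Finset.mem_filter.mpr ⟨h1, by omega, by omega, ?_⟩⟩
    have : ((iA : ℤ) + ((iB : ℤ) - (iA : ℤ))).toNat = iB := by omega
    rw [this]; exact h2
  · rintro ⟨k, i⟩ hmem
    dsimp only
    rw [Finset.mem_sigma] at hmem ⊢
    obtain ⟨h1, h2⟩ := hmem
    obtain ⟨hiIA, h0ik, hhik, htIB⟩ := Finset.mem_filter.mp h2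
    exact ⟨hiIA, htIB⟩
  · rintro ⟨iA, iB⟩ hmem
    dsimp only
    rw [Finset.mem_sigma] at hmem
    refine Sigma.ext rfl (heq_of_eq ?_)
    dsimp only
    omega
  · rintro ⟨k, i⟩ hmem
    rw [Finset.mem_sigma] at hmem
    dsimp only at hmem ⊢
    obtain ⟨h1, h2⟩ := hmem
    obtain ⟨hiIA, h0ik, hhik, htIB⟩ := Finset.mem_filter.mp h2
    refine Sigma.ext ?_ (heq_of_eq rfl)
    dsimp only
    omega
  · rintro ⟨iA, iB⟩ hmem
    dsimp only
    rw [show (iA : ℤ) + ((iB : ℤ) - (iA : ℤ)) = (iB : ℤ) by ring]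
end
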